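/- Let 0 < α < 1 and let ν be a Lévy measure on ℝ^d with ∫_{|x|>1}|x|^α (log|x|)^m ν(dx) < ∞ for some integer m ≥ 0. Define ν̃(B) = ∫_0^1 ν(s^{-1}B) s^{-α-1} ds. Then ∫_{|x|>1} |x|^α (log|x|)^m ν̃(dx) < ∞ if and only if ∫_{|x|>1} |x|^α (log|x|)^{m+1} ν(dx) < ∞; in fact ∫_{|x|>1}|x|^α(log|x|)^m ν̃(dx) = ∫_{|y|>1} |y|^α (log|y|)^{m+1}/(m+1) ν(dy). -/

import Mathlib

/-!
The measure `ν̃` is the image of `(s ^ (-α - 1) ds on (0, 1)) ⊗ ν` under `(s, x) ↦ s • x`, so by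
Tonelli `∫ f dν̃ = ∫ ν(dy) ∫₀¹ f (s • y) s ^ (-α - 1) ds`. For `f(x) = |x|^α (log|x|)^m` on
`|x| > 1` the inner integral is
`|y|^α ∫_{1/|y|}^1 (log (s|y|))^m ds / s = |y|^α (log|y|)^(m+1)/(m+1)`.
Tonelli needs `ν` to be σ-finite, which holds because `min(|x|², 1) ν` is a finite measure with a
density that vanishes only at the origin, a `ν`-null point.
-/

open MeasureTheory Set
open scoped ENNReal Pointwise

theorem sigmaFinite_of_lintegral_ne_top {X : Type*} [MeasurableSpace X] {ν : Measure X}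
    {f : X → ℝ≥0∞} (hf : Measurable f) (hf0 : ∀ᵐ x ∂ν, f x ≠ 0) (hfi : ∫⁻ x, f x ∂ν ≠ ∞) :
    SigmaFinite ν := by
  have : IsFiniteMeasure (ν.withDensity f) := isFiniteMeasure_withDensity hfi
  rw [← withDensity_inv_same hf hf0 ((ae_lt_top hf hfi).mono fun _ hx => hx.ne)]
  exact SigmaFinite.withDensity_of_ne_top <|
    (withDensity_absolutelyContinuous ν f).ae_le (hf0.mono fun _ hx => ENNReal.inv_ne_top.2 hx)

theorem sigmaFinite_of_lintegral_min_norm_sq_one_ne_top {E : Type*} [NormedAddCommGroup E]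
    [MeasurableSpace E] [OpensMeasurableSpace E] {ν : Measure E} (h0 : ν {0} = 0)
    (h : ∫⁻ x, ENNReal.ofReal (min (‖x‖ ^ 2) 1) ∂ν ≠ ∞) : SigmaFinite ν := by
  refine sigmaFinite_of_lintegral_ne_top (by fun_prop) ?_ h
  filter_upwards [measure_eq_zero_iff_ae_notMem.1 h0] with x hx
  have : 0 < ‖x‖ := norm_pos_iff.2 hx
  exact (ENNReal.ofReal_pos.2 (lt_min (by positivity) one_pos)).ne'

theorem lintegral_eq_lintegral_lintegral_smul {M E : Type*} [MeasurableSpace M]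
    [MeasurableSpace E] [SMul M E] [MeasurableSMul₂ M E] {ρ : Measure M} [SFinite ρ]
    {ν μ : Measure E} [SFinite ν] (hμ : ∀ B, MeasurableSet B → μ B = ∫⁻ s, ν ((s • ·) ⁻¹' B) ∂ρ)
    {f : E → ℝ≥0∞} (hf : Measurable f) :
    ∫⁻ x, f x ∂μ = ∫⁻ x, ∫⁻ s, f (s • x) ∂ρ ∂ν := by
  have hT : Measurable fun p : M × E => p.1 • p.2 := measurable_fst.smul measurable_snd
  have : μ = (ρ.prod ν).map fun p => p.1 • p.2 := by
    ext B hB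
    rw [hμ B hB, Measure.map_apply hT hB, Measure.prod_apply (hT hB)]
    rfl
  rw [this, lintegral_map hf hT]
  exact lintegral_prod_symm' _ (hf.comp hT)

theorem integral_log_mul_pow_div (m : ℕ) {r : ℝ} (hr : 0 < r) :
    ∫ s in r⁻¹..1, Real.log (s * r) ^ m / s = Real.log r ^ (m + 1) / (m + 1) := by
  have hpos : ∀ s ∈ uIcc r⁻¹ 1, 0 < s := fun s hs =>
    lt_of_lt_of_le (lt_min (inv_pos.2 hr) one_pos) hs.1
  have hderiv : ∀ s ∈ uIcc r⁻¹ 1, HasDerivAt (fun s => Real.log (s * r) ^ (m + 1) / (m + 1))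
      (Real.log (s * r) ^ m / s) s := by
    intro s hs
    have hs := hpos s hs
    refine ((((hasDerivAt_mul_const (x := s) r).log (by positivity)).fun_pow (m + 1)).div_const
      ((m : ℝ) + 1)).congr_deriv ?_
    field_simp
    push_cast
    ring
  have hcont : ContinuousOn (fun s => Real.log (s * r) ^ m / s) (uIcc r⁻¹ 1) := by
    refine ContinuousOn.div ?_ continuousOn_id fun s hs => (hpos s hs).ne'
    exact ((continuousOn_id.mul continuousOn_const).log
      fun s hs => (mul_pos (hpos s hs) hr).ne').pow m
  rw [intervalIntegral.integral_eq_sub_of_hasDerivAt hderiv hcont.intervalIntegrable,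
    inv_mul_cancel₀ hr.ne', one_mul, Real.log_one]
  simp

theorem rpow_neg_sub_one_mul_mul_rpow {s : ℝ} (hs : 0 < s) (r α : ℝ) (hr : 0 ≤ r) :
    s ^ (-α - 1) * (s * r) ^ α = r ^ α / s := by
  rw [Real.mul_rpow hs.le hr, Real.rpow_sub hs, Real.rpow_neg hs.le, Real.rpow_one]
  field_simp

theorem setLIntegral_Ioo_rpow_mul_indicator_rpow_log_pow (α : ℝ) (m : ℕ) {r : ℝ} (hr : 0 ≤ r) :
    ∫⁻ s in Ioo 0 1, ENNReal.ofReal (s ^ (-α - 1)) *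
        (Ioi 1).indicator (fun t => ENNReal.ofReal (t ^ α * Real.log t ^ m)) (s * r)
      = (Ioi 1).indicator
          (fun t => ENNReal.ofReal (t ^ α * Real.log t ^ (m + 1) / (m + 1))) r := by
  rcases le_or_gt r 1 with hr1 | hr1
  · rw [indicator_of_notMem (notMem_Ioi.2 hr1)]
    refine (setLIntegral_congr_fun measurableSet_Ioo fun s hs => ?_).trans lintegral_zero
    rw [indicator_of_notMem (notMem_Ioi.2 (by nlinarith [hs.1, hs.2])), mul_zero]
  have hr0 : 0 < r := one_pos.trans hr1
  set g : ℝ → ℝ := fun s => r ^ α * (Real.log (s * r) ^ m / s)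
  have hg : ∀ s ∈ Ioo 0 1, ENNReal.ofReal (s ^ (-α - 1)) *
      (Ioi 1).indicator (fun t => ENNReal.ofReal (t ^ α * Real.log t ^ m)) (s * r)
        = (Ioo r⁻¹ 1).indicator (fun s => ENNReal.ofReal (g s)) s := by
    intro s ⟨hs0, hs1⟩
    have hiff : 1 < s * r ↔ r⁻¹ < s := (inv_lt_iff_one_lt_mul₀ hr0).symm
    by_cases hsr : r⁻¹ < s
    · rw [indicator_of_mem (mem_Ioi.2 (hiff.2 hsr)),
        indicator_of_mem (show s ∈ Ioo r⁻¹ 1 from ⟨hsr, hs1⟩), ← ENNReal.ofReal_mul (by positivity), ← mul_assoc,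
        rpow_neg_sub_one_mul_mul_rpow hs0 r α hr0.le, div_mul_eq_mul_div, mul_div_assoc]
    · rw [indicator_of_notMem (mt (hiff.1 ∘ mem_Ioi.1) hsr),
        indicator_of_notMem (fun h => hsr h.1), mul_zero]
  have hpos : ∀ s ∈ Icc r⁻¹ 1, 0 < s := fun s hs => (inv_pos.2 hr0).trans_le hs.1
  have hcont : ContinuousOn g (Icc r⁻¹ 1) := by
    refine continuousOn_const.mul <|
      ContinuousOn.div ?_ continuousOn_id fun s hs => (hpos s hs).ne'
    exact ((continuousOn_id.mul continuousOn_const).log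
      fun s hs => (mul_pos (hpos s hs) hr0).ne').pow m
  have hg0 : ∀ s ∈ Ioo r⁻¹ 1, 0 ≤ g s := fun s hs => by
    have := Real.log_nonneg ((inv_lt_iff_one_lt_mul₀ hr0).1 hs.1).le
    have := hpos s (Ioo_subset_Icc_self hs)
    positivity
  have hle : r⁻¹ ≤ 1 := inv_le_one_of_one_le₀ hr1.le
  rw [setLIntegral_congr_fun measurableSet_Ioo hg, lintegral_indicator measurableSet_Ioo,
    Measure.restrict_restrict measurableSet_Ioo,
    inter_eq_left.2 (Ioo_subset_Ioo_left (inv_pos.2 hr0).le),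
    ← ofReal_integral_eq_lintegral_ofReal
      ((hcont.integrableOn_Icc).mono_set Ioo_subset_Icc_self)
      ((ae_restrict_iff' measurableSet_Ioo).2 (ae_of_all _ hg0)),
    ← integral_Ioc_eq_integral_Ioo, ← intervalIntegral.integral_of_le hle,
    intervalIntegral.integral_const_mul, integral_log_mul_pow_div m hr0,
    indicator_of_mem (show r ∈ Ioi 1 from hr1), mul_div_assoc]

theorem lintegral_ofReal_div_ne_top_iff {X : Type*} [MeasurableSpace X] {μ : Measure X}
    (f : X → ℝ) {c : ℝ} (hc : 0 < c) :
    ∫⁻ x, ENNReal.ofReal (f x / c) ∂μ ≠ ∞ ↔ ∫⁻ x, ENNReal.ofReal (f x) ∂μ ≠ ∞ := by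
  simp_rw [ENNReal.ofReal_div_of_pos hc, div_eq_mul_inv]
  rw [lintegral_mul_const' _ _ (ENNReal.inv_ne_top.2 (ENNReal.ofReal_pos.2 hc).ne')]
  simp [ENNReal.mul_eq_top, hc]

section Dilation

variable {E : Type*} [NormedAddCommGroup E] [NormedSpace ℝ E]

theorem setLIntegral_Ioo_rpow_mul_indicator_norm_smul (α : ℝ) (m : ℕ) (x : E) :
    ∫⁻ s in Ioo 0 1, ENNReal.ofReal (s ^ (-α - 1)) * {y : E | 1 < ‖y‖}.indicator
        (fun y => ENNReal.ofReal (‖y‖ ^ α * Real.log ‖y‖ ^ m)) (s • x)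
      = {y : E | 1 < ‖y‖}.indicator
          (fun y => ENNReal.ofReal (‖y‖ ^ α * Real.log ‖y‖ ^ (m + 1) / (m + 1))) x := by
  refine (setLIntegral_congr_fun measurableSet_Ioo fun s hs => ?_).trans
    (setLIntegral_Ioo_rpow_mul_indicator_rpow_log_pow α m (norm_nonneg x))
  have : s * ‖x‖ = ‖s • x‖ := by rw [norm_smul, Real.norm_of_nonneg hs.1.le]
  rw [this]
  -- both indicators unfold to the same `if 1 < ‖s • x‖ then … else 0`
  rfl

variable [MeasurableSpace E] [OpensMeasurableSpace E] [MeasurableSMul₂ ℝ E]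

theorem setLIntegral_norm_gt_one_rpow_log_pow_of_eq_lintegral_dilation (α : ℝ) (m : ℕ)
    (ν : Measure E) [SFinite ν] (νt : Measure E)
    (hνt : ∀ B : Set E, MeasurableSet B →
      νt B = ∫⁻ s in Ioo (0:ℝ) 1, ν (s⁻¹ • B) * ENNReal.ofReal (s ^ (-α - 1))) :
    ∫⁻ x in {x : E | 1 < ‖x‖}, ENNReal.ofReal (‖x‖ ^ α * Real.log ‖x‖ ^ m) ∂νt
      = ∫⁻ y in {y : E | 1 < ‖y‖},
          ENNReal.ofReal (‖y‖ ^ α * Real.log ‖y‖ ^ (m + 1) / (m + 1)) ∂ν := by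
  set w : ℝ → ℝ≥0∞ := fun s => ENNReal.ofReal (s ^ (-α - 1))
  have hw : Measurable w := by fun_prop
  have hw_lt_top : ∀ᵐ s ∂volume.restrict (Ioo 0 1), w s < ∞ :=
    ae_of_all _ fun _ => ENNReal.ofReal_lt_top
  have hνt_prod : ∀ B, MeasurableSet B →
      νt B = ∫⁻ s, ν ((s • ·) ⁻¹' B) ∂(volume.restrict (Ioo 0 1)).withDensity w := by
    intro B hB
    rw [hνt B hB, lintegral_withDensity_eq_lintegral_mul_non_measurable _ hw hw_lt_top]
    refine setLIntegral_congr_fun measurableSet_Ioo fun s hs => ?_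
    rw [Pi.mul_apply, mul_comm, preimage_smul₀ hs.1.ne']
  have hS : MeasurableSet {x : E | 1 < ‖x‖} := measurableSet_lt measurable_const measurable_norm
  rw [← lintegral_indicator hS, lintegral_eq_lintegral_lintegral_smul hνt_prod
    ((by fun_prop : Measurable _).indicator hS), ← lintegral_indicator hS]
  refine lintegral_congr fun x => ?_
  rw [lintegral_withDensity_eq_lintegral_mul_non_measurable _ hw hw_lt_top]
  exact setLIntegral_Ioo_rpow_mul_indicator_norm_smul α m x

end Dilation

theorem stmt_14_general {d : ℕ} (α : ℝ) (m : ℕ)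
    (ν : Measure (Fin d → ℝ)) (hν0 : ν {0} = 0)
    (hν : ∫⁻ x, ENNReal.ofReal (min (‖x‖ ^ 2) 1) ∂ν ≠ ⊤)
    (νt : Measure (Fin d → ℝ))
    (hνt : ∀ B : Set (Fin d → ℝ), MeasurableSet B →
      νt B = ∫⁻ s in Set.Ioo (0:ℝ) 1, ν (s⁻¹ • B) * ENNReal.ofReal (s ^ (-α - 1 : ℝ))) :
    (∫⁻ x in {x : Fin d → ℝ | 1 < ‖x‖},
        ENNReal.ofReal (‖x‖ ^ α * (Real.log ‖x‖) ^ m) ∂νt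
      = ∫⁻ y in {y : Fin d → ℝ | 1 < ‖y‖},
          ENNReal.ofReal (‖y‖ ^ α * (Real.log ‖y‖) ^ (m + 1) / (m + 1)) ∂ν) ∧
    ((∫⁻ x in {x : Fin d → ℝ | 1 < ‖x‖},
        ENNReal.ofReal (‖x‖ ^ α * (Real.log ‖x‖) ^ m) ∂νt ≠ ⊤) ↔
      ∫⁻ x in {x : Fin d → ℝ | 1 < ‖x‖},
        ENNReal.ofReal (‖x‖ ^ α * (Real.log ‖x‖) ^ (m + 1)) ∂ν ≠ ⊤) := by
  have : SigmaFinite ν := sigmaFinite_of_lintegral_min_norm_sq_one_ne_top hν0 hν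
  have h := setLIntegral_norm_gt_one_rpow_log_pow_of_eq_lintegral_dilation α m ν νt hνt
  exact ⟨h, h ▸ lintegral_ofReal_div_ne_top_iff _ (Nat.cast_add_one_pos m)⟩

/-- For 0 < α < 1, m ≥ 0 and a Lévy measure ν with
∫_{|x|>1}|x|^α(log|x|)^m ν(dx) < ∞, the measure ν̃(B) = ∫_0^1 ν(s⁻¹B)s^{-α-1}ds
satisfies ∫_{|x|>1}|x|^α(log|x|)^m ν̃(dx) = ∫_{|y|>1}|y|^α(log|y|)^{m+1}/(m+1) ν(dy);
in particular the left side is finite iff ∫_{|x|>1}|x|^α(log|x|)^{m+1} ν(dx) < ∞. -/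
theorem stmt_14 {d : ℕ} (α : ℝ) (hα1 : 0 < α) (hα2 : α < 1) (m : ℕ)
    (ν : Measure (Fin d → ℝ)) (hν0 : ν {0} = 0)
    (hν : ∫⁻ x, ENNReal.ofReal (min (‖x‖ ^ 2) 1) ∂ν ≠ ⊤)
    (hνm : ∫⁻ x in {x : Fin d → ℝ | 1 < ‖x‖},
      ENNReal.ofReal (‖x‖ ^ α * (Real.log ‖x‖) ^ m) ∂ν ≠ ⊤)
    (νt : Measure (Fin d → ℝ))
    (hνt : ∀ B : Set (Fin d → ℝ), MeasurableSet B →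
      νt B = ∫⁻ s in Set.Ioo (0:ℝ) 1, ν (s⁻¹ • B) * ENNReal.ofReal (s ^ (-α - 1 : ℝ))) :
    (∫⁻ x in {x : Fin d → ℝ | 1 < ‖x‖},
        ENNReal.ofReal (‖x‖ ^ α * (Real.log ‖x‖) ^ m) ∂νt
      = ∫⁻ y in {y : Fin d → ℝ | 1 < ‖y‖},
          ENNReal.ofReal (‖y‖ ^ α * (Real.log ‖y‖) ^ (m + 1) / (m + 1)) ∂ν) ∧
    ((∫⁻ x in {x : Fin d → ℝ | 1 < ‖x‖},
        ENNReal.ofReal (‖x‖ ^ α * (Real.log ‖x‖) ^ m) ∂νt ≠ ⊤) ↔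
      ∫⁻ x in {x : Fin d → ℝ | 1 < ‖x‖},
        ENNReal.ofReal (‖x‖ ^ α * (Real.log ‖x‖) ^ (m + 1)) ∂ν ≠ ⊤) :=
  stmt_14_general α m ν hν0 hν νt hνt
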